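/- Let ⟨A,m⟩ be a monotonic distributive semilattice. Then m²a ≤ ma for all a ∈ A if and only if the relation R_m is weakly dense, i.e., (P,Z) ∈ R_m implies (P,Z) ∈ R_m² for all irreducible filters P and all Z ∈ S(X(A)). -/

import Mathlib

namespace DS

variable {A : Type*} [SemilatticeInf A] [OrderTop A]

/-- A filter: an upset containing the top element, closed under meets. -/
def IsFilt (F : Set A) : Prop :=
  IsUpperSet F ∧ ⊤ ∈ F ∧ ∀ ⦃a b : A⦄, a ∈ F → b ∈ F → a ⊓ b ∈ F

/-- An irreducible (prime) filter: a proper filter that is meet-irreducible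
among filters. -/
def IsIrred (F : Set A) : Prop :=
  IsFilt F ∧ F ≠ Set.univ ∧
    ∀ F₁ F₂ : Set A, IsFilt F₁ → IsFilt F₂ → F = F₁ ∩ F₂ → F = F₁ ∨ F = F₂

/-- An order ideal: a downset in which every pair of elements has an upper
bound in the set. -/
def IsOrdIdeal (I : Set A) : Prop :=
  IsLowerSet I ∧ ∀ a ∈ I, ∀ b ∈ I, ∃ c ∈ I, a ≤ c ∧ b ≤ c

/-- Distributivity for a meet-semilattice with top. -/
def IsDistrib (A : Type*) [SemilatticeInf A] [OrderTop A] : Prop :=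
  ∀ a b c : A, a ⊓ b ≤ c → ∃ a₁ b₁ : A, a ≤ a₁ ∧ b ≤ b₁ ∧ c = a₁ ⊓ b₁

/-- The set of irreducible filters of `A`, ordered by inclusion. -/
def Spec (A : Type*) [SemilatticeInf A] [OrderTop A] : Type _ :=
  {P : Set A // IsIrred P}

instance : PartialOrder (Spec A) := Subtype.partialOrder _

/-- `beta a` = the set of irreducible filters containing `a`. -/
def beta (a : A) : Set (Spec A) := {P : Spec A | a ∈ P.1}

/-- The topology on `Spec A` generated by the basis `{beta aᶜ : a ∈ A}`. -/
def specTop (A : Type*) [SemilatticeInf A] [OrderTop A] : TopologicalSpace (Spec A) :=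
  TopologicalSpace.generateFrom {s : Set (Spec A) | ∃ a : A, s = (beta a)ᶜ}

/-- Special basic saturated subsets: intersections of dually directed families
of basic opens `beta aᶜ`. -/
def SBS (Z : Set (Spec A)) : Prop :=
  ∃ L : Set A, (∀ a ∈ L, ∀ b ∈ L, ∃ c ∈ L, beta a ∪ beta b ⊆ beta c) ∧
    Z = ⋂ a ∈ L, (beta a)ᶜ

/-- The order ideal associated to a special basic saturated set. -/
def IA (Z : Set (Spec A)) : Set A := {a : A | beta a ∩ Z = ∅}

/-- The special basic saturated set associated to an order ideal. -/
def alphaI (I : Set A) : Set (Spec A) := {P : Spec A | P.1 ∩ I = ∅}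

/-- The filter associated to a closed set. -/
def FY (Y : Set (Spec A)) : Set A := {a : A | Y ⊆ beta a}

/-- The multirelation `R_m` on the dual space. -/
def Rm (m : A → A) (P : Spec A) (Z : Set (Spec A)) : Prop :=
  {a : A | m a ∈ P.1} ∩ IA Z = ∅

/-- The multirelation `G_m` on the dual space. -/
def Gm (m : A → A) (P : Spec A) (Y : Set (Spec A)) : Prop :=
  FY Y ⊆ {a : A | m a ∈ P.1}

/-- The composed relation `R_m²`. -/
def Rm2 (m : A → A) (P : Spec A) (Z : Set (Spec A)) : Prop :=
  ∃ S : Set (Spec A), SBS S ∧ Rm m P S ∧ ∀ x ∈ S, Rm m x Z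

end DS

open DS Set

/-
Everything rests on the prime filter theorem for meet-semilattices: a filter disjoint from a
directed set `I` extends, by Zorn, to a maximal such filter, and a maximal one is meet-irreducible
because the filters it generates together with elements outside it meet `I`, where directedness
lets two witnesses be merged. Applied to the directed family defining a special basic saturated
set `Z`, it gives compactness: `β d ∩ Z = ∅` forces `β d = ∅` or `d` below a member of the family.

If `m² ≤ m` and `(P, Z) ∈ R_m`, the intermediate set is `S = ⋂_{d ∈ I(Z)} β(m d)ᶜ`. Points of `S`
are `R_m`-related to `Z` by construction, and an `a ∈ I(S)` with `m a ∈ P` lies, by compactness,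
below some `m d` with `d ∈ I(Z)`, so `m d ≥ m² d ≥ m a` is in `P`, contradicting `(P, Z) ∈ R_m`.
Conversely, if `m² a ≰ m a`, an irreducible `P` containing `m² a` but not `m a` satisfies
`(P, β(a)ᶜ) ∈ R_m`, while any witness `S` of `R_m²` would put `m a` into `I(S)`.
-/

namespace DS

variable {A : Type*} [SemilatticeInf A] [OrderTop A]

lemma isFilt_Ici (a : A) : IsFilt (Ici a) :=
  ⟨fun _ _ hxy hx => hx.trans hxy, le_top, fun _ _ hx hy => le_inf hx hy⟩

lemma IsFilt.isFilt_setOf_inf_le {P : Set A} (hP : IsFilt P) (a : A) :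
    IsFilt {x | ∃ p ∈ P, p ⊓ a ≤ x} := by
  refine ⟨?_, ⟨⊤, hP.2.1, le_top⟩, ?_⟩
  · rintro x y hxy ⟨p, hp, hpx⟩
    exact ⟨p, hp, hpx.trans hxy⟩
  · rintro x y ⟨p, hp, hpx⟩ ⟨q, hq, hqy⟩
    exact ⟨p ⊓ q, hP.2.2 hp hq, le_inf ((inf_le_inf_right a inf_le_left).trans hpx)
      ((inf_le_inf_right a inf_le_right).trans hqy)⟩

lemma isFilt_sUnion_of_isChain {c : Set (Set A)} (hc : ∀ F ∈ c, IsFilt F)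
    (hchain : IsChain (· ⊆ ·) c) (hne : c.Nonempty) : IsFilt (⋃₀ c) := by
  obtain ⟨F₀, hF₀⟩ := hne
  refine ⟨?_, ⟨F₀, hF₀, (hc F₀ hF₀).2.1⟩, ?_⟩
  · rintro x y hxy ⟨F, hF, hxF⟩
    exact ⟨F, hF, (hc F hF).1 hxy hxF⟩
  · rintro x y ⟨F₁, hF₁, hx⟩ ⟨F₂, hF₂, hy⟩
    rcases hchain.total hF₁ hF₂ with h | h
    · exact ⟨F₂, hF₂, (hc F₂ hF₂).2.2 (h hx) hy⟩
    · exact ⟨F₁, hF₁, (hc F₁ hF₁).2.2 hx (h hy)⟩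

lemma exists_inf_le_mem_of_maximal {I P : Set A}
    (hP : Maximal (fun G => IsFilt G ∧ Disjoint G I) P) {a : A} (ha : a ∉ P) :
    ∃ d ∈ I, ∃ p ∈ P, p ⊓ a ≤ d := by
  have hG := hP.prop.1.isFilt_setOf_inf_le a
  have hPG : P ⊆ {x | ∃ p ∈ P, p ⊓ a ≤ x} := fun p hp => ⟨p, hp, inf_le_left⟩
  have hmeet : ¬ Disjoint {x | ∃ p ∈ P, p ⊓ a ≤ x} I := fun hdisj =>
    ha (hP.2 ⟨hG, hdisj⟩ hPG ⟨⊤, hP.prop.1.2.1, inf_le_right⟩)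
  obtain ⟨d, ⟨p, hp, hpd⟩, hdI⟩ := not_disjoint_iff.1 hmeet
  exact ⟨d, hdI, p, hp, hpd⟩

lemma isIrred_of_maximal {I P : Set A} (hP : Maximal (fun G => IsFilt G ∧ Disjoint G I) P)
    (hI : DirectedOn (· ≤ ·) I) (hne : I.Nonempty) : IsIrred P := by
  obtain ⟨hPfilt, hPI⟩ := hP.prop
  refine ⟨hPfilt, fun hPuniv => ?_, fun F₁ F₂ hF₁ hF₂ hPeq => ?_⟩
  · obtain ⟨i, hi⟩ := hne
    exact disjoint_left.1 hPI (hPuniv ▸ mem_univ i) hi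
  by_contra! hne
  have hP₁ : P ⊆ F₁ := hPeq ▸ inter_subset_left
  have hP₂ : P ⊆ F₂ := hPeq ▸ inter_subset_right
  obtain ⟨a₁, ha₁, ha₁P⟩ := not_subset.1 fun h => hne.1 (hP₁.antisymm h)
  obtain ⟨a₂, ha₂, ha₂P⟩ := not_subset.1 fun h => hne.2 (hP₂.antisymm h)
  obtain ⟨d₁, hd₁, p₁, hp₁, hpd₁⟩ := exists_inf_le_mem_of_maximal hP ha₁P
  obtain ⟨d₂, hd₂, p₂, hp₂, hpd₂⟩ := exists_inf_le_mem_of_maximal hP ha₂P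
  obtain ⟨d, hd, hd₁d, hd₂d⟩ := hI d₁ hd₁ d₂ hd₂
  have hp : p₁ ⊓ p₂ ∈ P := hPfilt.2.2 hp₁ hp₂
  have hdF₁ : d ∈ F₁ := hF₁.1 (((inf_le_inf_right a₁ inf_le_left).trans hpd₁).trans hd₁d)
    (hF₁.2.2 (hP₁ hp) ha₁)
  have hdF₂ : d ∈ F₂ := hF₂.1 (((inf_le_inf_right a₂ inf_le_right).trans hpd₂).trans hd₂d)
    (hF₂.2.2 (hP₂ hp) ha₂)
  exact disjoint_left.1 hPI (hPeq ▸ ⟨hdF₁, hdF₂⟩) hd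

theorem exists_spec_of_disjoint {F I : Set A} (hF : IsFilt F) (hI : DirectedOn (· ≤ ·) I)
    (hne : I.Nonempty) (hFI : Disjoint F I) : ∃ P : Spec A, F ⊆ P.1 ∧ Disjoint P.1 I := by
  obtain ⟨P, hFP, hP⟩ := zorn_subset_nonempty {G | IsFilt G ∧ Disjoint G I}
    (fun c hc hchain hcne => ⟨⋃₀ c, ⟨isFilt_sUnion_of_isChain (fun F hF => (hc hF).1) hchain hcne,
      disjoint_sUnion_left.2 fun F hF => (hc hF).2⟩, fun _ => subset_sUnion_of_mem⟩)
    F ⟨hF, hFI⟩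
  exact ⟨⟨P, isIrred_of_maximal hP hI hne⟩, hFP, hP.prop.2⟩

lemma exists_spec_of_not_le {a b : A} (h : ¬ a ≤ b) : ∃ P : Spec A, a ∈ P.1 ∧ b ∉ P.1 := by
  obtain ⟨P, haP, hPb⟩ := exists_spec_of_disjoint (isFilt_Ici a) (directedOn_singleton b)
    (singleton_nonempty b) (disjoint_singleton_right.2 h)
  exact ⟨P, haP le_rfl, disjoint_singleton_right.1 hPb⟩

lemma beta_subset_beta_iff {a b : A} : beta a ⊆ beta b ↔ a ≤ b := by
  refine ⟨fun h => ?_, fun h P hP => P.2.1.1 h hP⟩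
  by_contra hab
  obtain ⟨P, haP, hbP⟩ := exists_spec_of_not_le hab
  exact hbP (h haP)

lemma le_of_beta_eq_empty {a : A} (h : beta a = ∅) (b : A) : a ≤ b :=
  beta_subset_beta_iff.1 (h ▸ empty_subset _)

lemma beta_eq_empty_or_exists_le {I : Set A} {a : A} (hI : DirectedOn (· ≤ ·) I)
    (h : beta a ∩ ⋂ d ∈ I, (beta d)ᶜ = ∅) : beta a = ∅ ∨ ∃ d ∈ I, a ≤ d := by
  rcases I.eq_empty_or_nonempty with rfl | hne
  · left
    simpa using h
  right
  by_contra! hle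
  obtain ⟨P, haP, hPI⟩ := exists_spec_of_disjoint (isFilt_Ici a) hI hne
    (disjoint_left.2 fun d had hd => hle d hd had)
  refine (eq_empty_iff_forall_notMem.1 h) P ⟨haP le_rfl, mem_iInter₂.2 fun d hd hdP => ?_⟩
  exact disjoint_left.1 hPI hdP hd

lemma mem_IA_biInter_compl {L : Set A} {l : A} (hl : l ∈ L) : l ∈ IA (⋂ d ∈ L, (beta d)ᶜ) :=
  eq_empty_iff_forall_notMem.2 fun _ hx => mem_iInter₂.1 hx.2 l hl hx.1

lemma sbs_biInter_compl {L : Set A} (hL : DirectedOn (· ≤ ·) L) : SBS (⋂ d ∈ L, (beta d)ᶜ) :=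
  ⟨L, fun a ha b hb =>
    let ⟨c, hc, hac, hbc⟩ := hL a ha b hb
    ⟨c, hc, union_subset (beta_subset_beta_iff.2 hac) (beta_subset_beta_iff.2 hbc)⟩, rfl⟩

lemma sbs_compl_beta (a : A) : SBS (beta a)ᶜ := by
  simpa using sbs_biInter_compl (directedOn_singleton a)

lemma IA_compl_beta (a : A) : IA (beta a)ᶜ = Iic a := by
  ext b
  exact sdiff_eq_empty.trans beta_subset_beta_iff

lemma directedOn_IA {Z : Set (Spec A)} (hZ : SBS Z) : DirectedOn (· ≤ ·) (IA Z) := by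
  obtain ⟨L, hL, rfl⟩ := hZ
  have hL' : DirectedOn (· ≤ ·) L := fun a ha b hb =>
    let ⟨c, hc, hsub⟩ := hL a ha b hb
    ⟨c, hc, beta_subset_beta_iff.1 (subset_union_left.trans hsub),
      beta_subset_beta_iff.1 (subset_union_right.trans hsub)⟩
  intro a ha b hb
  rcases beta_eq_empty_or_exists_le hL' ha with ha₀ | ⟨l₁, hl₁, hal₁⟩
  · exact ⟨b, hb, le_of_beta_eq_empty ha₀ b, le_rfl⟩
  rcases beta_eq_empty_or_exists_le hL' hb with hb₀ | ⟨l₂, hl₂, hbl₂⟩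
  · exact ⟨a, ha, le_rfl, le_of_beta_eq_empty hb₀ a⟩
  obtain ⟨l, hl, hl₁l, hl₂l⟩ := hL' l₁ hl₁ l₂ hl₂
  exact ⟨l, mem_IA_biInter_compl hl, hal₁.trans hl₁l, hbl₂.trans hl₂l⟩

variable {m : A → A} {P : Spec A}

lemma rm_iff {Z : Set (Spec A)} : Rm m P Z ↔ ∀ a ∈ IA Z, m a ∉ P.1 := by
  simp only [Rm, eq_empty_iff_forall_notMem, mem_inter_iff, mem_ofPred_eq, not_and']

lemma rm_compl_beta_iff (hm : Monotone m) {a : A} : Rm m P (beta a)ᶜ ↔ m a ∉ P.1 := by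
  rw [rm_iff, IA_compl_beta]
  exact ⟨fun h => h a le_rfl, fun h b hb hmb => h (P.2.1.1 (hm hb) hmb)⟩

lemma rm2_of_rm (hm : Monotone m) (hsq : ∀ a, m (m a) ≤ m a) {Z : Set (Spec A)} (hZ : SBS Z)
    (hR : Rm m P Z) : Rm2 m P Z := by
  refine ⟨⋂ b ∈ m '' IA Z, (beta b)ᶜ, sbs_biInter_compl ((directedOn_IA hZ).mono_comp hm), ?_, ?_⟩
  · refine rm_iff.2 fun a ha hmaP => ?_
    rcases beta_eq_empty_or_exists_le ((directedOn_IA hZ).mono_comp hm) ha with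
      ha₀ | ⟨_, ⟨d, hd, rfl⟩, had⟩
    · exact rm_iff.1 hR a (by simp [IA, ha₀]) hmaP
    · exact rm_iff.1 hR d hd (P.2.1.1 ((hm had).trans (hsq d)) hmaP)
  · intro x hx
    exact rm_iff.2 fun d hd hmd => mem_iInter₂.1 hx (m d) (mem_image_of_mem m hd) hmd

lemma sq_le_of_forall_rm2 (hm : Monotone m)
    (hdense : ∀ (P : Spec A) (Z : Set (Spec A)), SBS Z → Rm m P Z → Rm2 m P Z) (a : A) :
    m (m a) ≤ m a := by
  by_contra hle
  obtain ⟨P, hmmP, hmP⟩ := exists_spec_of_not_le hle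
  obtain ⟨S, -, hPS, hSZ⟩ := hdense P _ (sbs_compl_beta a) ((rm_compl_beta_iff hm).2 hmP)
  have hma : m a ∈ IA S := eq_empty_iff_forall_notMem.2 fun x hx =>
    (rm_compl_beta_iff hm).1 (hSZ x hx.2) hx.1
  exact rm_iff.1 hPS _ hma hmmP

end DS

theorem stmt17_general {A : Type*} [SemilatticeInf A] [OrderTop A]
    (m : A → A) (hm : ∀ a b : A, a ≤ b → m a ≤ m b) :
    (∀ a : A, m (m a) ≤ m a) ↔
      ∀ P : Spec A, ∀ Z : Set (Spec A), SBS Z → Rm m P Z → Rm2 m P Z :=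
  ⟨fun hsq _ _ hZ hR => rm2_of_rm (fun a b => hm a b) hsq hZ hR,
    sq_le_of_forall_rm2 fun a b => hm a b⟩

theorem stmt17 {A : Type*} [SemilatticeInf A] [OrderTop A] (hA : IsDistrib A)
    (m : A → A) (hm : ∀ a b : A, a ≤ b → m a ≤ m b) :
    (∀ a : A, m (m a) ≤ m a) ↔
      ∀ P : Spec A, ∀ Z : Set (Spec A), SBS Z → Rm m P Z → Rm2 m P Z :=
  stmt17_general m hm
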